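/- For real b > 1 and positive integer H, ∑_{1 ≤ h ≤ H} (1/h) ∑_{1 ≤ l < b} min(2b, ‖θhl‖^{−1}) ≪ b·log H + ∑_{1 ≤ j < bH} min(2b, ‖θj‖^{−1}) · g(j)/j, where g(j) = ∑_{h | j, 1 ≤ h < b} h, for any real θ. -/
import Mathlib


open Finset

/-- Distance to the nearest integer. -/
noncomputable def nint (x : ℝ) : ℝ := |x - round x|

/-- `min(2b, ‖θ‖⁻¹)`, with the convention that the value is `2b` when `‖θ‖ = 0`. -/
noncomputable def mintwo (b θ : ℝ) : ℝ :=
  if nint θ = 0 then 2 * b else min (2 * b) (nint θ)⁻¹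

/-- Truncated divisor sum `g(j) = ∑_{h ∣ j, h < b} h`. -/
noncomputable def truncDivSum (b : ℝ) (j : ℕ) : ℝ :=
  ∑ h ∈ j.divisors.filter (fun h : ℕ => (h : ℝ) < b), (h : ℝ)

lemma mintwo_nonneg {b : ℝ} (hb : 0 < b) (θ : ℝ) : 0 ≤ mintwo b θ := by
  unfold mintwo
  split
  · positivity
  · exact le_min (by positivity) (inv_nonneg.2 (abs_nonneg _))

theorem divisor_rearrangement :
    ∃ C > 0, ∀ (θ b : ℝ) (H : ℕ), 1 < b → 0 < H →
      ∑ h ∈ Finset.Icc 1 H, (1 / (h : ℝ)) *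
          ∑ l ∈ Finset.Ico 1 ⌈b⌉₊, mintwo b (θ * h * l)
        ≤ C * (b * Real.log H +
            ∑ j ∈ Finset.Ico 1 ⌈b * H⌉₊, mintwo b (θ * j) * truncDivSum b j / j) := by
  refine ⟨1, one_pos, fun θ b H hb hH => ?_⟩
  have hb0 : (0:ℝ) < b := lt_trans one_pos hb
  rw [one_mul]
  have hlog : 0 ≤ b * Real.log H := by
    apply mul_nonneg hb0.le
    apply Real.log_nonneg
    exact_mod_cast hH
  have key : ∑ h ∈ Finset.Icc 1 H, (1 / (h : ℝ)) *
          ∑ l ∈ Finset.Ico 1 ⌈b⌉₊, mintwo b (θ * h * l)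
      ≤ ∑ j ∈ Finset.Ico 1 ⌈b * H⌉₊, mintwo b (θ * j) * truncDivSum b j / j := by
    -- f on sigma pairs
    set f : ℕ × ℕ → ℝ := fun p => mintwo b (θ * p.1) * p.2 / p.1 with hf
    have step1 : ∑ h ∈ Finset.Icc 1 H, (1 / (h : ℝ)) *
          ∑ l ∈ Finset.Ico 1 ⌈b⌉₊, mintwo b (θ * h * l)
        = ∑ p ∈ (Finset.Icc 1 H) ×ˢ (Finset.Ico 1 ⌈b⌉₊), f (p.1 * p.2, p.2) := by
      rw [Finset.sum_product]
      refine Finset.sum_congr rfl fun h hh => ?_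
      rw [Finset.mul_sum]
      refine Finset.sum_congr rfl fun l hl => ?_
      have hh1 : 1 ≤ h := (Finset.mem_Icc.1 hh).1
      have hl1 : 1 ≤ l := (Finset.mem_Ico.1 hl).1
      have hhr : (0:ℝ) < (h:ℝ) := by exact_mod_cast hh1
      have hlr : (0:ℝ) < (l:ℝ) := by exact_mod_cast hl1
      simp only [hf]
      push_cast
      field_simp
    rw [step1]
    have inj : Set.InjOn (fun p : ℕ × ℕ => (p.1 * p.2, p.2))
        ((Finset.Icc 1 H) ×ˢ (Finset.Ico 1 ⌈b⌉₊) : Finset (ℕ × ℕ)) := by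
      intro p hp q hq hpq
      simp only [Prod.mk.injEq] at hpq
      obtain ⟨h1, h2⟩ := hpq
      have hl1 : 1 ≤ p.2 := (Finset.mem_Ico.1 (Finset.mem_product.1 hp).2).1
      have : p.1 = q.1 := by rw [← h2] at h1; exact Nat.eq_of_mul_eq_mul_right hl1 h1
      exact Prod.ext this h2
    rw [← Finset.sum_image (fun p hp q hq h => inj hp hq h)]
    have sub : ((Finset.Icc 1 H) ×ˢ (Finset.Ico 1 ⌈b⌉₊)).image
          (fun p : ℕ × ℕ => (p.1 * p.2, p.2))
        ⊆ (Finset.Ico 1 ⌈b * H⌉₊).biUnion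
            (fun j => ({j} : Finset ℕ) ×ˢ (j.divisors.filter (fun l : ℕ => (l : ℝ) < b))) := by
      intro q hq
      simp only [Finset.mem_image] at hq
      obtain ⟨p, hp, rfl⟩ := hq
      obtain ⟨hph, hpl⟩ := Finset.mem_product.1 hp
      have hh1 : 1 ≤ p.1 := (Finset.mem_Icc.1 hph).1
      have hhH : p.1 ≤ H := (Finset.mem_Icc.1 hph).2
      have hl1 : 1 ≤ p.2 := (Finset.mem_Ico.1 hpl).1
      have hlb : (p.2 : ℝ) < b := by
        have h1 : p.2 ≤ ⌈b⌉₊ - 1 := Nat.le_sub_one_of_lt (Finset.mem_Ico.1 hpl).2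
        have h2 : ((⌈b⌉₊ : ℝ) - 1) < b := by
          have := Nat.ceil_lt_add_one hb0.le
          linarith
        calc (p.2 : ℝ) ≤ (⌈b⌉₊ - 1 : ℕ) := by exact_mod_cast h1
          _ ≤ (⌈b⌉₊ : ℝ) - 1 := by
              push_cast [Nat.cast_sub (by omega : 1 ≤ ⌈b⌉₊)]; exact le_rfl
          _ < b := h2
      have hjlt : ((p.1 * p.2 : ℕ) : ℝ) < b * H := by
        push_cast
        calc (p.1 : ℝ) * p.2 ≤ (H : ℝ) * p.2 := by
              apply mul_le_mul_of_nonneg_right (by exact_mod_cast hhH) (by positivity)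
          _ < (H : ℝ) * b := by
              apply mul_lt_mul_of_pos_left hlb (by exact_mod_cast hH)
          _ = b * H := mul_comm _ _
      apply Finset.mem_biUnion.2
      refine ⟨p.1 * p.2, ?_, ?_⟩
      · exact Finset.mem_Ico.2 ⟨Nat.one_le_iff_ne_zero.2 (Nat.mul_ne_zero (by omega) (by omega)), Nat.lt_ceil.2 hjlt⟩
      · apply Finset.mem_product.2
        refine ⟨Finset.mem_singleton_self _, Finset.mem_filter.2 ⟨?_, hlb⟩⟩
        exact Nat.mem_divisors.2 ⟨dvd_mul_left _ _, Nat.mul_ne_zero (by omega) (by omega)⟩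
    have fnn : ∀ q ∈ (Finset.Ico 1 ⌈b * H⌉₊).biUnion
            (fun j => ({j} : Finset ℕ) ×ˢ (j.divisors.filter (fun l : ℕ => (l : ℝ) < b))),
          0 ≤ f q := by
      intro q hq
      apply div_nonneg (mul_nonneg (mintwo_nonneg hb0 _) (Nat.cast_nonneg _)) (Nat.cast_nonneg _)
    calc _ ≤ ∑ q ∈ (Finset.Ico 1 ⌈b * H⌉₊).biUnion
            (fun j => ({j} : Finset ℕ) ×ˢ (j.divisors.filter (fun l : ℕ => (l : ℝ) < b))), f q :=
          Finset.sum_le_sum_of_subset_of_nonneg sub (fun q hq _ => fnn q hq)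
      _ = ∑ j ∈ Finset.Ico 1 ⌈b * H⌉₊, mintwo b (θ * j) * truncDivSum b j / j := by
          rw [Finset.sum_biUnion]
          · refine Finset.sum_congr rfl fun j hj => ?_
            rw [Finset.sum_product, Finset.sum_singleton]
            simp only [hf, truncDivSum]
            rw [Finset.mul_sum, Finset.sum_div]
          · intro x hx y hy hxy
            apply Finset.disjoint_left.2
            intro q hq1 hq2
            apply hxy
            have := (Finset.mem_product.1 hq1).1
            have := (Finset.mem_product.1 hq2).1
            simp_all
  linarith
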